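/- There exist a constant λ > 1 (λ ≈ 1.05459) and constants C₂ > C₁ > 0 such that for all sufficiently large n, C₁·λ^n ≤ d_{FQ;ave}(n) ≤ C₂·λ^n; in particular the average number of FQ-legal decompositions of integers in [0, q_{n+1}) tends to infinity exponentially fast. -/

import Mathlib

open scoped BigOperators

/-- A finite set of indices is FQ-legal: distinct indices never differ by 1, 3 or 4,
and the set does not contain both 1 and 3. -/
def FQLegal (L : Finset ℕ) : Prop :=
  (∀ i ∈ L, ∀ j ∈ L, i ≠ j →
    max i j - min i j ≠ 1 ∧ max i j - min i j ≠ 3 ∧ max i j - min i j ≠ 4) ∧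
  ¬ (1 ∈ L ∧ 3 ∈ L)

/-- `m` has an FQ-legal decomposition using only `q_1, …, q_{i-1}`. -/
def FQRepr (q : ℕ → ℕ) (i m : ℕ) : Prop :=
  ∃ L : Finset ℕ, (∀ j ∈ L, 1 ≤ j ∧ j < i) ∧ FQLegal L ∧ (∑ j ∈ L, q j) = m

/-- `q` (1-indexed) is the Fibonacci Quilt sequence: `q 1 = 1` and for `i ≥ 2`,
`q i` is the smallest positive integer having no FQ-legal decomposition using
`{q_1, …, q_{i-1}}`. -/
def IsFQSeq (q : ℕ → ℕ) : Prop :=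
  q 1 = 1 ∧ ∀ i, 2 ≤ i → IsLeast {m : ℕ | 0 < m ∧ ¬ FQRepr q i m} (q i)

/-- The number of FQ-legal decompositions of `m` (the empty decomposition of `0` counts). -/
noncomputable def dFQ (q : ℕ → ℕ) (m : ℕ) : ℕ :=
  Nat.card {L : Finset ℕ // (∀ j ∈ L, 1 ≤ j) ∧ FQLegal L ∧ (∑ j ∈ L, q j) = m}

/-- The average number of FQ-legal decompositions of the integers in `[0, q_{n+1})`. -/
noncomputable def dFQave (q : ℕ → ℕ) (n : ℕ) : ℝ :=
  (∑ m ∈ Finset.range (q (n + 1)), (dFQ q m : ℝ)) / (q (n + 1) : ℝ)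

/-!
The sequence satisfies `q (n + 5) = q (n + 4) + q n`. The inequality `≥` holds because a
decomposition of a number below `q n` can be extended by the index `n + 4`; for `≤` one checks,
by cases on the two largest indices, that `q (n + 4) + q n` has no decomposition with indices
`≤ n + 4` (this uses the companion identity `q (n + 3) = q (n + 1) + q n`). Hence `q n` grows
like `ρ ^ n`, where `ρ ≈ 1.3247` is the real root of `x ^ 5 = x ^ 4 + 1`.

The sum of `dFQ q m` over `m < q (n + 1)` counts the FQ-legal subsets of `[1, n]` with sum below
`q (n + 1)`. This count lies between the numbers of subsets of `[1, n - 5]` and of `[1, n]` whose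
pairwise differences avoid `{1, 3, 4}`. Those numbers are submultiplicative, and
supermultiplicative up to a shift by 4 (leave a gap of four between two blocks), so by Fekete's
lemma they are `μ ^ (n + O(1))`. Since there are 91 such subsets of `[1, 12]`,
`μ ^ 16 ≥ 91 > ρ ^ 16`, and the average is of order `(μ / ρ) ^ n` with `μ / ρ > 1`.
-/

open Finset

/-- FQ-legality without the condition on `{1, 3}`, which makes it invariant under translation. -/
def DiffLegal (L : Finset ℕ) : Prop :=
  ∀ i ∈ L, ∀ j ∈ L, i < j → j ≠ i + 1 ∧ j ≠ i + 3 ∧ j ≠ i + 4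

instance : DecidablePred DiffLegal := fun _ => by unfold DiffLegal; infer_instance

instance : DecidablePred FQLegal := fun _ => by unfold FQLegal; infer_instance

theorem fqLegal_iff {L : Finset ℕ} : FQLegal L ↔ DiffLegal L ∧ ¬(1 ∈ L ∧ 3 ∈ L) := by
  refine and_congr_left fun _ => ⟨fun h i hi j hj hij => ?_, fun h i hi j hj hij => ?_⟩
  · have := h i hi j hj hij.ne
    omega
  · rcases hij.lt_or_gt with hlt | hlt
    · have := h i hi j hj hlt
      omega
    · have := h j hj i hi hlt
      omega

theorem DiffLegal.mono {L M : Finset ℕ} (hL : DiffLegal L) (h : M ⊆ L) : DiffLegal M :=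
  fun i hi j hj hij => hL i (h hi) j (h hj) hij

theorem diffLegal_map_add {L : Finset ℕ} {k : ℕ} :
    DiffLegal (L.map (addRightEmbedding k)) ↔ DiffLegal L := by
  simp only [DiffLegal, mem_map, addRightEmbedding_apply, forall_exists_index, and_imp,
    forall_apply_eq_imp_iff₂]
  refine forall₂_congr fun i _ => forall₂_congr fun j _ => ?_
  omega

theorem DiffLegal.add_two_eq_or_add_five_le {L : Finset ℕ} {a y : ℕ} (hL : DiffLegal L)
    (ha : a ∈ L) (hmax : ∀ z ∈ L, z ≤ a) (hy : y ∈ L.erase a) : y + 2 = a ∨ y + 5 ≤ a := by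
  obtain ⟨hya, hyL⟩ := mem_erase.1 hy
  have hlt := lt_of_le_of_ne (hmax y hyL) hya
  have := hL y hyL a ha hlt
  omega

theorem DiffLegal.add_five_le {L : Finset ℕ} {a y : ℕ} (hL : DiffLegal L) (ha : a ∈ L)
    (hmax : ∀ z ∈ L, z ≤ a) (hgap : ∀ z ∈ L, z + 2 ≠ a) (hy : y ∈ L.erase a) : y + 5 ≤ a :=
  (hL.add_two_eq_or_add_five_le ha hmax hy).resolve_left (hgap y (mem_of_mem_erase hy))

theorem DiffLegal.add_five_le_of_mem_erase_erase {L : Finset ℕ} {a b y : ℕ} (hL : DiffLegal L)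
    (ha : a ∈ L) (hb : b ∈ L) (hab : b + 2 = a) (hmax : ∀ z ∈ L, z ≤ a)
    (hy : y ∈ (L.erase a).erase b) : y + 5 ≤ b := by
  have hrest := fun z (hz : z ∈ L.erase a) => hL.add_two_eq_or_add_five_le ha hmax hz
  have := (hL.mono (erase_subset _ _)).add_two_eq_or_add_five_le (mem_erase.2 ⟨by omega, hb⟩)
    (fun z hz => by have := hrest z hz; omega) hy
  have := hrest y (mem_of_mem_erase hy)
  omega

theorem FQLegal.diffLegal {L : Finset ℕ} (hL : FQLegal L) : DiffLegal L := (fqLegal_iff.1 hL).1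

theorem FQLegal.mono {L M : Finset ℕ} (hL : FQLegal L) (h : M ⊆ L) : FQLegal M :=
  ⟨fun i hi j hj hij => hL.1 i (h hi) j (h hj) hij, fun h13 => hL.2 ⟨h h13.1, h h13.2⟩⟩

theorem fqLegal_singleton (a : ℕ) : FQLegal {a} :=
  fqLegal_iff.2 ⟨fun i hi j hj hij => by simp_all, fun h => by simp at h; omega⟩

theorem FQLegal.insert {L : Finset ℕ} {a : ℕ} (hL : FQLegal L) (hlt : ∀ j ∈ L, j + 5 ≤ a)
    (ha : 4 ≤ a) : FQLegal (insert a L) := by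
  rw [fqLegal_iff] at hL ⊢
  refine ⟨fun i hi j hj hij => ?_, fun h13 => ?_⟩
  · rw [mem_insert] at hi hj
    rcases hi with rfl | hi <;> rcases hj with rfl | hj
    · omega
    · have := hlt j hj
      omega
    · have := hlt i hi
      omega
    · exact hL.1 i hi j hj hij
  · simp only [mem_insert] at h13
    exact hL.2 ⟨h13.1.resolve_left (by omega), h13.2.resolve_left (by omega)⟩

theorem FQRepr.mono {q : ℕ → ℕ} {i i' m : ℕ} (h : FQRepr q i m) (hi : i ≤ i') :
    FQRepr q i' m :=
  let ⟨L, hb, hL, hs⟩ := h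
  ⟨L, fun j hj => ⟨(hb j hj).1, (hb j hj).2.trans_le hi⟩, hL, hs⟩

/-- A decidable form of `FQRepr`, valid for sequences agreeing with `v` below `i`
(`fqRepr_iff_reprBy`). -/
def ReprBy (v : ℕ → ℕ) (i m : ℕ) : Prop :=
  ∃ L ∈ (Icc 1 (i - 1)).powerset, FQLegal L ∧ ∑ j ∈ L, v j = m

instance (v : ℕ → ℕ) (i m : ℕ) : Decidable (ReprBy v i m) := by unfold ReprBy; infer_instance

theorem fqRepr_iff_reprBy {q v : ℕ → ℕ} {i m : ℕ} (hv : ∀ j, 1 ≤ j → j < i → q j = v j) :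
    FQRepr q i m ↔ ReprBy v i m := by
  have hsum : ∀ L : Finset ℕ, (∀ j ∈ L, 1 ≤ j ∧ j < i) → ∑ j ∈ L, q j = ∑ j ∈ L, v j :=
    fun L hb => sum_congr rfl fun j hj => hv j (hb j hj).1 (hb j hj).2
  have hb : ∀ L : Finset ℕ, (∀ j ∈ L, 1 ≤ j ∧ j < i) ↔ L ∈ (Icc 1 (i - 1)).powerset := by
    intro L
    simp only [mem_powerset, subset_iff, mem_Icc]
    exact forall₂_congr fun j _ => by omega
  constructor
  · rintro ⟨L, hL, hl, hs⟩
    exact ⟨L, (hb L).1 hL, hl, hsum L hL ▸ hs⟩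
  · rintro ⟨L, hL, hl, hs⟩
    exact ⟨L, (hb L).2 hL, hl, hsum L ((hb L).2 hL) ▸ hs⟩

def fqInit (i : ℕ) : ℕ := [0, 1, 2, 3, 4, 5, 7, 9, 12, 16].getD i 0

namespace IsFQSeq

variable {q : ℕ → ℕ}

theorem pos (hq : IsFQSeq q) {i : ℕ} (hi : 1 ≤ i) : 0 < q i := by
  obtain rfl | hi := hi.eq_or_lt
  · simp [hq.1]
  · exact (hq.2 i hi).1.1

theorem not_fqRepr_self (hq : IsFQSeq q) {i : ℕ} (hi : 2 ≤ i) : ¬FQRepr q i (q i) :=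
  (hq.2 i hi).1.2

theorem le_of_not_fqRepr (hq : IsFQSeq q) {i x : ℕ} (hi : 2 ≤ i) (hx0 : 0 < x)
    (hx : ¬FQRepr q i x) : q i ≤ x :=
  (hq.2 i hi).2 ⟨hx0, hx⟩

theorem fqRepr_of_lt (hq : IsFQSeq q) {i m : ℕ} (hi : 2 ≤ i) (hm0 : 0 < m) (hm : m < q i) :
    FQRepr q i m := by
  by_contra h
  exact (hq.le_of_not_fqRepr hi hm0 h).not_gt hm

theorem sum_ne_self (hq : IsFQSeq q) {L : Finset ℕ} {i : ℕ} (hi : 2 ≤ i) (hL : FQLegal L)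
    (hb : ∀ j ∈ L, 1 ≤ j ∧ j < i) : ∑ j ∈ L, q j ≠ q i :=
  fun h => hq.not_fqRepr_self hi ⟨L, hb, hL, h⟩

theorem eq_of_reprBy (hq : IsFQSeq q) {v : ℕ → ℕ} {i : ℕ} (hi : 2 ≤ i)
    (hv : ∀ j, 1 ≤ j → j < i → q j = v j) (hpos : 0 < v i) (hnot : ¬ReprBy v i (v i))
    (hrep : ∀ m ∈ Ico 1 (v i), ReprBy v i m) : q i = v i := by
  refine le_antisymm (hq.le_of_not_fqRepr hi hpos ((fqRepr_iff_reprBy hv).not.2 hnot)) ?_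
  by_contra! h
  exact hq.not_fqRepr_self hi
    ((fqRepr_iff_reprBy hv).2 (hrep _ (mem_Ico.2 ⟨hq.pos (by omega), h⟩)))

theorem eq_fqInit (hq : IsFQSeq q) : ∀ i, 1 ≤ i → i ≤ 9 → q i = fqInit i := by
  have hcheck : ∀ i ∈ Icc 2 9, 0 < fqInit i ∧ ¬ReprBy fqInit i (fqInit i) ∧
      ∀ m ∈ Ico 1 (fqInit i), ReprBy fqInit i m := by
    decide +kernel
  intro i
  induction i using Nat.strong_induction_on with
  | _ i ih =>
    intro hi1 hi9
    obtain rfl | hi2 := hi1.eq_or_lt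
    · exact hq.1
    · obtain ⟨h1, h2, h3⟩ := hcheck i (mem_Icc.2 ⟨hi2, hi9⟩)
      exact hq.eq_of_reprBy hi2 (fun j hj1 hji => ih j hji hj1 (by omega)) h1 h2 h3

theorem values (hq : IsFQSeq q) :
    q 1 = 1 ∧ q 2 = 2 ∧ q 3 = 3 ∧ q 4 = 4 ∧ q 5 = 5 ∧ q 6 = 7 ∧ q 7 = 9 ∧ q 8 = 12 ∧
      q 9 = 16 := by
  have h := hq.eq_fqInit
  exact ⟨h 1 le_rfl (by norm_num), h 2 (by norm_num) (by norm_num),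
    h 3 (by norm_num) (by norm_num), h 4 (by norm_num) (by norm_num),
    h 5 (by norm_num) (by norm_num), h 6 (by norm_num) (by norm_num),
    h 7 (by norm_num) (by norm_num), h 8 (by norm_num) (by norm_num), h 9 (by norm_num) le_rfl⟩

theorem lt_add_one (hq : IsFQSeq q) {i : ℕ} (hi : 1 ≤ i) : q i < q (i + 1) := by
  obtain rfl | hi := hi.eq_or_lt
  · have := hq.values
    show q 1 < q 2
    omega
  have hrep : FQRepr q (i + 1) (q i) :=
    ⟨{i}, by simp; omega, fqLegal_singleton i, sum_singleton _ _⟩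
  by_contra! h
  obtain h | h := h.lt_or_eq
  · exact hq.not_fqRepr_self (by omega)
      ((hq.fqRepr_of_lt hi (hq.pos (by omega)) h).mono (by omega))
  · exact hq.not_fqRepr_self (by omega) (h ▸ hrep)

theorem lt_of_lt (hq : IsFQSeq q) {i j : ℕ} (hi : 1 ≤ i) (hij : i < j) : q i < q j := by
  induction j, hij using Nat.le_induction with
  | base => exact hq.lt_add_one hi
  | succ j hj ih => exact ih.trans (hq.lt_add_one (by omega))

theorem le_of_le (hq : IsFQSeq q) {i j : ℕ} (hi : 1 ≤ i) (hij : i ≤ j) : q i ≤ q j := by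
  obtain rfl | hij := hij.eq_or_lt
  · rfl
  · exact (hq.lt_of_lt hi hij).le

theorem add_le (hq : IsFQSeq q) {n : ℕ} (hn : 1 ≤ n) : q (n + 4) + q n ≤ q (n + 5) := by
  by_contra! h
  apply hq.not_fqRepr_self (i := n + 5) (by omega)
  rcases lt_trichotomy (q (n + 5)) (q (n + 4)) with hlt | heq | hgt
  · exact (hq.fqRepr_of_lt (by omega) (hq.pos (by omega)) hlt).mono (by omega)
  · exact ⟨{n + 4}, by simp, fqLegal_singleton _, by simp [heq]⟩
  have hn2 : 2 ≤ n := by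
    by_contra
    obtain rfl : n = 1 := by omega
    have := hq.1
    omega
  obtain ⟨L, hb, hL, hs⟩ :=
    hq.fqRepr_of_lt (m := q (n + 5) - q (n + 4)) hn2 (by omega) (by omega)
  have hb' : ∀ j ∈ L, j + 5 ≤ n + 4 := fun j hj => by have := hb j hj; omega
  refine ⟨insert (n + 4) L, fun j hj => ?_, hL.insert hb' (by omega), ?_⟩
  · rcases mem_insert.1 hj with rfl | hj
    · omega
    · have := hb j hj
      omega
  · rw [sum_insert fun h => by have := hb' _ h; omega, hs]
    omega

theorem add_lt (hq : IsFQSeq q) {a : ℕ} (ha : 1 ≤ a) : q (a + 2) + q a < q (a + 5) := by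
  have := hq.add_le ha
  have := hq.lt_of_lt (i := a + 2) (j := a + 4) (by omega) (by omega)
  omega

theorem add_add_lt (hq : IsFQSeq q) (m : ℕ) : q (m + 7) + q (m + 5) + q (m + 3) < q (m + 10) := by
  have : q (m + 9) + q (m + 5) ≤ q (m + 10) := hq.add_le (n := m + 5) (by omega)
  have : q (m + 8) + q (m + 4) ≤ q (m + 9) := hq.add_le (n := m + 4) (by omega)
  have : q (m + 7) + q (m + 3) ≤ q (m + 8) := hq.add_le (n := m + 3) (by omega)
  have := hq.pos (i := m + 4) (by omega)
  omega

theorem sum_lt (hq : IsFQSeq q) {n : ℕ} {L : Finset ℕ} (hL : DiffLegal L)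
    (hb : ∀ j ∈ L, 1 ≤ j ∧ j ≤ n) : ∑ j ∈ L, q j < q (n + 3) := by
  induction n using Nat.strong_induction_on generalizing L with
  | _ n ih =>
  have hmax : ∀ y ∈ L, y ≤ n := fun y hy => (hb y hy).2
  rcases L.eq_empty_or_nonempty with rfl | ⟨x, hx⟩
  · simpa using hq.pos (by omega : 1 ≤ n + 3)
  by_cases hn : n ∈ L
  swap
  · obtain ⟨k, rfl⟩ : ∃ k, n = k + 1 := ⟨n - 1, by have := hb x hx; omega⟩
    refine (ih k (by omega) hL fun j hj => ⟨(hb j hj).1, ?_⟩).trans (hq.lt_add_one (by omega))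
    have : j ≠ k + 1 := fun h => hn (h ▸ hj)
    have := hmax j hj
    omega
  rw [← add_sum_erase L q hn]
  by_cases htwo : ∃ a ∈ L, a + 2 = n
  · obtain ⟨a, ha, rfl⟩ := htwo
    rw [← add_sum_erase _ q (mem_erase.2 ⟨by omega, ha⟩)]
    show q (a + 2) + (q a + _) < q (a + 5)
    have hsub : (L.erase (a + 2)).erase a ⊆ L := (erase_subset _ _).trans (erase_subset _ _)
    rcases ((L.erase (a + 2)).erase a).eq_empty_or_nonempty with h0 | ⟨y, hy⟩
    · have := hq.add_lt (hb a ha).1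
      rw [h0, sum_empty]
      omega
    obtain ⟨m, rfl⟩ : ∃ m, a = m + 5 :=
      ⟨a - 5, by have := hL.add_five_le_of_mem_erase_erase hn ha rfl hmax hy; omega⟩
    have := ih m (by omega) (hL.mono hsub) fun z hz =>
      ⟨(hb z (hsub hz)).1, by have := hL.add_five_le_of_mem_erase_erase hn ha rfl hmax hz; omega⟩
    have := hq.add_add_lt m
    show q (m + 7) + (q (m + 5) + _) < q (m + 10)
    omega
  · have hlow := fun y hy => hL.add_five_le hn hmax (fun z hz h => htwo ⟨z, hz, h⟩) (y := y) hy
    rcases (L.erase n).eq_empty_or_nonempty with h0 | ⟨y, hy⟩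
    · rw [h0, sum_empty, add_zero]
      exact hq.lt_of_lt (hb n hn).1 (by omega)
    obtain ⟨k, rfl⟩ : ∃ k, n = k + 5 :=
      ⟨n - 5, by have := hlow y hy; have := hb y (mem_of_mem_erase hy); omega⟩
    have := ih k (by omega) (hL.mono (erase_subset _ _)) fun z hz =>
      ⟨(hb z (mem_of_mem_erase hz)).1, by have := hlow z hz; omega⟩
    have : q (k + 5) + q (k + 3) < q (k + 8) := hq.add_lt (by omega)
    show q (k + 5) + _ < q (k + 8)
    omega

theorem sum_ne_add_of_top (hq : IsFQSeq q) {L : Finset ℕ} {a i : ℕ} (hL : FQLegal L)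
    (hb : ∀ j ∈ L, 1 ≤ j ∧ j ≤ a) (ha : a ∈ L) (hgap : ∀ j ∈ L, j + 2 ≠ a) (hi : 2 ≤ i)
    (hai : a ≤ i + 4) : ∑ j ∈ L, q j ≠ q a + q i := by
  rw [← add_sum_erase L q ha, Nat.add_left_cancel_iff.ne]
  refine hq.sum_ne_self hi (hL.mono (erase_subset a L)) fun y hy =>
    ⟨(hb y (mem_of_mem_erase hy)).1, ?_⟩
  have := hL.diffLegal.add_five_le ha (fun z hz => (hb z hz).2) hgap hy
  omega

theorem sum_ne_add_add_of_top (hq : IsFQSeq q) {L : Finset ℕ} {a b i : ℕ} (hL : FQLegal L)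
    (hb : ∀ j ∈ L, 1 ≤ j ∧ j ≤ a) (ha : a ∈ L) (hbL : b ∈ L) (hab : b + 2 = a) (hi : 2 ≤ i)
    (hbi : b ≤ i + 4) : ∑ j ∈ L, q j ≠ q a + q b + q i := by
  have hsub : (L.erase a).erase b ⊆ L := (erase_subset _ _).trans (erase_subset _ _)
  rw [← add_sum_erase L q ha, ← add_sum_erase _ q (mem_erase.2 ⟨by omega, hbL⟩), ← add_assoc,
    Nat.add_left_cancel_iff.ne]
  refine hq.sum_ne_self hi (hL.mono hsub) fun y hy => ⟨(hb y (hsub hy)).1, ?_⟩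
  have := hL.diffLegal.add_five_le_of_mem_erase_erase ha hbL hab (fun z hz => (hb z hz).2) hy
  omega

/-- `q (k + 9) + q (k + 5)` has no FQ-legal decomposition with indices `≤ k + 9`: according to
the two largest indices, the rest of such a decomposition would be a decomposition of some
`q i` using only indices `< i`. -/
theorem le_add_of_recurrence (hq : IsFQSeq q) (k : ℕ)
    (h5 : ∀ m, 2 ≤ m → m ≤ k + 4 → q (m + 5) = q (m + 4) + q m)
    (h3 : ∀ m, 2 ≤ m → m ≤ k + 6 → q (m + 3) = q (m + 1) + q m) :
    q (k + 10) ≤ q (k + 9) + q (k + 5) := by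
  refine hq.le_of_not_fqRepr (by omega) (Nat.add_pos_left (hq.pos (by omega)) _) ?_
  rintro ⟨L, hb, hL, hs⟩
  have below : ∀ a, (∀ j ∈ L, a < j → k + 10 ≤ j) → ∀ j ∈ L, 1 ≤ j ∧ j ≤ a :=
    fun a ha j hj => ⟨(hb j hj).1, by have := ha j hj; have := (hb j hj).2; omega⟩
  have e1 : q (k + 9) = q (k + 8) + q (k + 4) := h5 (k + 4) (by omega) (by omega)
  have e2 : q (k + 7) = q (k + 5) + q (k + 4) := h3 (k + 4) (by omega) (by omega)
  have e3 : q (k + 7) = q (k + 6) + q (k + 2) := h5 (k + 2) (by omega) (by omega)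
  have e4 : q (k + 9) = q (k + 7) + q (k + 6) := h3 (k + 6) (by omega) (by omega)
  have e5 : q (k + 8) = q (k + 6) + q (k + 5) := h3 (k + 5) (by omega) (by omega)
  have gap : ∀ a, a ∉ L → ∀ j ∈ L, j + 2 ≠ a + 2 :=
    fun a ha j hj h => ha (by rwa [show j = a by omega] at hj)
  by_cases h9 : k + 9 ∈ L
  · have hb9 := below (k + 9) fun j _ _ => by omega
    by_cases h7 : k + 7 ∈ L
    · have hpair := sum_le_sum_of_subset (f := q) (insert_subset h9 (singleton_subset_iff.2 h7))
      rw [sum_pair (by omega)] at hpair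
      have := hq.lt_of_lt (i := k + 5) (j := k + 7) (by omega) (by omega)
      omega
    · exact hq.sum_ne_add_of_top hL hb9 h9 (gap _ h7) (by omega) (by omega) hs
  by_cases h8 : k + 8 ∈ L
  · have hb8 := below (k + 8) fun j hj _ => by have := (hb j hj).2; grind
    by_cases h6 : k + 6 ∈ L
    · exact hq.sum_ne_add_add_of_top (i := k + 2) hL hb8 h8 h6 rfl (by omega) (by omega) (by omega)
    · exact hq.sum_ne_add_of_top (i := k + 7) hL hb8 h8 (gap _ h6) (by omega) (by omega)
        (by omega)
  by_cases h7 : k + 7 ∈ L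
  · have hb7 := below (k + 7) fun j hj _ => by have := (hb j hj).2; grind
    by_cases h5' : k + 5 ∈ L
    · exact hq.sum_ne_add_add_of_top (i := k + 6) hL hb7 h7 h5' rfl (by omega) (by omega) (by omega)
    · exact hq.sum_ne_add_of_top (i := k + 8) hL hb7 h7 (gap _ h5') (by omega) (by omega)
        (by omega)
  have : ∑ j ∈ L, q j < q (k + 9) :=
    hq.sum_lt hL.diffLegal (below (k + 6) fun j hj _ => by have := (hb j hj).2; grind)
  omega

theorem add_three_of_add_five (hq : IsFQSeq q) {N : ℕ}
    (h5 : ∀ m, 2 ≤ m → m ≤ N → q (m + 5) = q (m + 4) + q m) :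
    ∀ m, 2 ≤ m → m ≤ N + 2 → q (m + 3) = q (m + 1) + q m := by
  intro m
  induction m using Nat.strong_induction_on with
  | _ m ih =>
  intro hm hmN
  rcases lt_or_ge m 4 with hm4 | hm4
  · obtain ⟨-, h2, h3, h4, h5', h6, -⟩ := hq.values
    interval_cases m <;> simp only [Nat.reduceAdd] <;> omega
  obtain ⟨k, rfl⟩ : ∃ k, m = k + 4 := ⟨m - 4, by omega⟩
  have e1 : q (k + 7) = q (k + 6) + q (k + 2) := h5 (k + 2) (by omega) (by omega)
  have e2 : q (k + 6) = q (k + 4) + q (k + 3) := ih (k + 3) (by omega) (by omega) (by omega)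
  have e3 : q (k + 5) = q (k + 3) + q (k + 2) := ih (k + 2) (by omega) (by omega) (by omega)
  show q (k + 7) = q (k + 5) + q (k + 4)
  omega

theorem add_five (hq : IsFQSeq q) {n : ℕ} (hn : 2 ≤ n) : q (n + 5) = q (n + 4) + q n := by
  induction n using Nat.strong_induction_on with
  | _ n ih =>
  rcases lt_or_ge n 5 with hn5 | hn5
  · obtain ⟨-, h2, h3, h4, -, h6, h7, h8, h9⟩ := hq.values
    interval_cases n <;> simp only [Nat.reduceAdd] <;> omega
  obtain ⟨k, rfl⟩ : ∃ k, n = k + 5 := ⟨n - 5, by omega⟩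
  have h5 : ∀ m, 2 ≤ m → m ≤ k + 4 → q (m + 5) = q (m + 4) + q m :=
    fun m hm hmk => ih m (by omega) hm
  exact le_antisymm (hq.le_add_of_recurrence k h5 (hq.add_three_of_add_five h5))
    (hq.add_le (by omega))

theorem sum_Icc_add_le (hq : IsFQSeq q) (n : ℕ) : ∑ j ∈ Icc 1 n, q j + q 5 ≤ q (n + 5) := by
  induction n with
  | zero => simp
  | succ n ih =>
    have : q (n + 5) + q (n + 1) ≤ q (n + 6) := hq.add_le (n := n + 1) (by omega)
    rw [sum_Icc_succ_top (by omega)]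
    show _ ≤ q (n + 6)
    omega

end IsFQSeq

theorem nonneg_of_add_five_eq {b : ℕ → ℝ} (hrec : ∀ n, b (n + 5) = b (n + 4) + b n)
    (h0 : ∀ n < 5, 0 ≤ b n) (n : ℕ) : 0 ≤ b n := by
  induction n using Nat.strong_induction_on with
  | _ n ih =>
  rcases lt_or_ge n 5 with hn | hn
  · exact h0 n hn
  obtain ⟨k, rfl⟩ : ∃ k, n = k + 5 := ⟨n - 5, by omega⟩
  rw [hrec]
  exact add_nonneg (ih _ (by omega)) (ih _ (by omega))

theorem exists_pow_five_eq_pow_four_add_one :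
    ∃ ρ : ℝ, 1 ≤ ρ ∧ ρ ≤ 53 / 40 ∧ ρ ^ 5 = ρ ^ 4 + 1 := by
  obtain ⟨ρ, ⟨h1, h2⟩, hρ⟩ := intermediate_value_Icc (show (1 : ℝ) ≤ 53 / 40 by norm_num)
    (f := fun x : ℝ => x ^ 5 - x ^ 4) (by fun_prop)
    (show (1 : ℝ) ∈ Set.Icc (1 ^ 5 - 1 ^ 4) ((53 / 40) ^ 5 - (53 / 40) ^ 4) by norm_num)
  exact ⟨ρ, h1, h2, by linarith [hρ]⟩

theorem Subadditive.div_le_lim {u : ℕ → ℝ} (hu : Subadditive u)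
    (hbdd : BddBelow (Set.range fun n => u n / n)) {x : ℝ} {d : ℕ} (hd : 0 < d)
    (h : ∀ j : ℕ, j * x ≤ u (j * d)) : x / d ≤ hu.lim := by
  refine ge_of_tendsto ((hu.tendsto_lim hbdd).comp (Filter.tendsto_id.atTop_mul_const' hd)) ?_
  filter_upwards [Filter.eventually_ge_atTop 1] with j hj
  rw [Function.comp_apply, id, Nat.cast_mul, ← div_div,
    div_le_div_iff_of_pos_right (by positivity), le_div_iff₀ (by positivity)]
  linarith [h j]

/-- Fekete's lemma for `log ∘ f`; iterating `hsup` gives `f n ^ j ≤ f (j * (n + c))`, which puts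
`log f n / (n + c)` below the limit. -/
theorem exists_pow_le_le_pow_add {f : ℕ → ℕ} {c : ℕ} (hpos : ∀ n, 0 < f n)
    (hsub : ∀ m n, f (m + n) ≤ f m * f n) (hsup : ∀ m n, f m * f n ≤ f (m + n + c)) :
    ∃ μ : ℝ, 0 < μ ∧ ∀ n, μ ^ n ≤ f n ∧ (f n : ℝ) ≤ μ ^ (n + c) := by
  have hf : ∀ n, (0 : ℝ) < f n := fun n => by exact_mod_cast hpos n
  set u : ℕ → ℝ := fun n => Real.log (f n)
  have hexp : ∀ n, Real.exp (u n) = f n := fun n => Real.exp_log (hf n)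
  have hu : Subadditive u := fun m n => by
    simp only [u]
    rw [← Real.log_mul (hf m).ne' (hf n).ne']
    exact Real.log_le_log (hf _) (by exact_mod_cast hsub m n)
  have hbdd : BddBelow (Set.range fun n => u n / n) := ⟨0, by
    rintro _ ⟨n, rfl⟩
    exact div_nonneg (Real.log_nonneg (by exact_mod_cast hpos n)) n.cast_nonneg⟩
  refine ⟨Real.exp hu.lim, Real.exp_pos _, fun n => ⟨?_, ?_⟩⟩
  · rcases n.eq_zero_or_pos with rfl | hn
    · simpa using (by exact_mod_cast hpos 0 : (1 : ℝ) ≤ f 0)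
    have := hu.lim_le_div hbdd hn.ne'
    rw [le_div_iff₀ (by positivity)] at this
    rw [← Real.exp_nat_mul, ← hexp]
    exact Real.exp_le_exp.2 (by linarith)
  rcases (n + c).eq_zero_or_pos with hnc | hnc
  · obtain ⟨rfl, rfl⟩ : n = 0 ∧ c = 0 := by omega
    have := hsup 0 0
    have : f 0 ≤ 1 := by nlinarith [hpos 0]
    simpa using (by exact_mod_cast this : (f 0 : ℝ) ≤ 1)
  have hpow : ∀ j, f n ^ j ≤ f (j * (n + c)) := fun j => by
    induction j with
    | zero =>
      rw [pow_zero, zero_mul]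
      exact hpos 0
    | succ j ih =>
      calc f n ^ (j + 1) = f n ^ j * f n := pow_succ _ _
        _ ≤ f (j * (n + c)) * f n := Nat.mul_le_mul_right _ ih
        _ ≤ f ((j + 1) * (n + c)) := by convert hsup _ _ using 2; ring
  have hlim := hu.div_le_lim hbdd hnc fun j => by
    rw [← Real.log_pow]
    exact Real.log_le_log (pow_pos (hf n) j) (by exact_mod_cast hpow j)
  rw [div_le_iff₀ (by positivity)] at hlim
  rw [← Real.exp_nat_mul, ← hexp]
  exact Real.exp_le_exp.2 (by push_cast at hlim ⊢; linarith)

def diffLegalCount (s : Finset ℕ) : ℕ := #{L ∈ s.powerset | DiffLegal L}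

theorem diffLegalCount_pos (s : Finset ℕ) : 0 < diffLegalCount s :=
  card_pos.2 ⟨∅, mem_filter.2 ⟨empty_mem_powerset s, fun i hi => absurd hi (notMem_empty i)⟩⟩

theorem diffLegalCount_mono {s t : Finset ℕ} (h : s ⊆ t) :
    diffLegalCount s ≤ diffLegalCount t :=
  card_le_card (filter_subset_filter _ (powerset_mono.2 h))

theorem diffLegalCount_map_add (s : Finset ℕ) (k : ℕ) :
    diffLegalCount (s.map (addRightEmbedding k)) = diffLegalCount s := by
  have : {L ∈ (s.map (addRightEmbedding k)).powerset | DiffLegal L} =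
      {L ∈ s.powerset | DiffLegal L}.map (mapEmbedding (addRightEmbedding k)).toEmbedding := by
    ext L
    simp only [mem_filter, mem_powerset, mem_map, subset_map_iff, RelEmbedding.coe_toEmbedding,
      mapEmbedding_apply]
    constructor
    · rintro ⟨⟨u, hu, rfl⟩, hL⟩
      exact ⟨u, ⟨hu, diffLegal_map_add.1 hL⟩, rfl⟩
    · rintro ⟨u, ⟨hu, hL⟩, rfl⟩
      exact ⟨⟨u, hu, rfl⟩, diffLegal_map_add.2 hL⟩
  rw [diffLegalCount, this, card_map]
  rfl

theorem diffLegalCount_union_le (s t : Finset ℕ) :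
    diffLegalCount (s ∪ t) ≤ diffLegalCount s * diffLegalCount t := by
  rw [diffLegalCount, diffLegalCount, diffLegalCount, ← card_product]
  refine card_le_card_of_injOn (fun L => (L ∩ s, L ∩ t)) (fun L hL => ?_) fun L hL M hM h => ?_
  · simp only [coe_filter, mem_powerset, Set.mem_ofPred_eq, mem_coe, mem_product,
      mem_filter] at hL ⊢
    exact ⟨⟨inter_subset_right, hL.2.mono inter_subset_left⟩,
      ⟨inter_subset_right, hL.2.mono inter_subset_left⟩⟩
  · simp only [coe_filter, mem_powerset, Set.mem_ofPred_eq, Prod.mk.injEq] at hL hM h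
    rw [← inter_eq_left.2 hL.1, ← inter_eq_left.2 hM.1, inter_union_distrib_left,
      inter_union_distrib_left, h.1, h.2]

theorem mul_le_diffLegalCount_union {s t : Finset ℕ} (hst : ∀ a ∈ s, ∀ b ∈ t, a + 5 ≤ b) :
    diffLegalCount s * diffLegalCount t ≤ diffLegalCount (s ∪ t) := by
  have hdisj : Disjoint s t := disjoint_left.2 fun x hs ht => by have := hst x hs x ht; omega
  have key : ∀ A B, A ⊆ s → B ⊆ t → (A ∪ B) ∩ s = A ∧ (A ∪ B) ∩ t = B := fun A B hA hB => by
    rw [union_inter_distrib_right, union_inter_distrib_right, inter_eq_left.2 hA,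
      inter_eq_left.2 hB, disjoint_iff_inter_eq_empty.1 (hdisj.symm.mono_left hB),
      disjoint_iff_inter_eq_empty.1 (hdisj.mono_left hA), union_empty, empty_union]
    exact ⟨rfl, rfl⟩
  rw [diffLegalCount, diffLegalCount, diffLegalCount, ← card_product]
  refine card_le_card_of_injOn (fun P => P.1 ∪ P.2) (fun P hP => ?_) fun P hP P' hP' h => ?_
  · simp only [coe_product, coe_filter, mem_powerset, Set.mem_prod, Set.mem_ofPred_eq] at hP ⊢
    obtain ⟨⟨hA, hAL⟩, hB, hBL⟩ := hP
    refine ⟨union_subset_union hA hB, fun i hi j hj hij => ?_⟩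
    rw [mem_union] at hi hj
    rcases hi with hi | hi <;> rcases hj with hj | hj
    · exact hAL i hi j hj hij
    · have := hst i (hA hi) j (hB hj)
      omega
    · have := hst j (hA hj) i (hB hi)
      omega
    · exact hBL i hi j hj hij
  · simp only [coe_product, coe_filter, mem_powerset, Set.mem_prod, Set.mem_ofPred_eq] at hP hP'
    have hP := key _ _ hP.1.1 hP.2.1
    have hP' := key _ _ hP'.1.1 hP'.2.1
    simp only at h
    exact Prod.ext (hP.1.symm.trans (h ▸ hP'.1)) (hP.2.symm.trans (h ▸ hP'.2))

theorem diffLegalCount_Icc_add_le (m n : ℕ) :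
    diffLegalCount (Icc 1 (m + n)) ≤ diffLegalCount (Icc 1 m) * diffLegalCount (Icc 1 n) := by
  rw [← diffLegalCount_map_add (Icc 1 n) m]
  refine le_trans (diffLegalCount_mono fun x hx => ?_) (diffLegalCount_union_le _ _)
  simp only [map_add_right_Icc, mem_union, mem_Icc] at hx ⊢
  omega

theorem mul_le_diffLegalCount_Icc (m n : ℕ) :
    diffLegalCount (Icc 1 m) * diffLegalCount (Icc 1 n) ≤ diffLegalCount (Icc 1 (m + n + 4)) := by
  rw [← diffLegalCount_map_add (Icc 1 n) (m + 4)]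
  refine le_trans (mul_le_diffLegalCount_union fun a ha b hb => ?_) (diffLegalCount_mono ?_)
  · simp only [map_add_right_Icc, mem_Icc] at ha hb
    omega
  · intro x hx
    simp only [map_add_right_Icc, mem_union, mem_Icc] at hx ⊢
    omega

theorem ninety_one_le_diffLegalCount : 91 ≤ diffLegalCount (Icc 1 12) := by
  decide +kernel

/-- For the FQ sequence these are all FQ-legal decompositions of the integers in `[0, q (n + 1))`
(`IsFQSeq.dFQave_eq`). -/
def legalBelow (q : ℕ → ℕ) (n : ℕ) : Finset (Finset ℕ) :=
  {L ∈ (Icc 1 n).powerset | FQLegal L ∧ ∑ j ∈ L, q j < q (n + 1)}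

theorem card_legalBelow_le (q : ℕ → ℕ) (n : ℕ) : #(legalBelow q n) ≤ diffLegalCount (Icc 1 n) :=
  card_le_card fun L hL => by
    simp only [legalBelow, mem_filter] at hL ⊢
    exact ⟨hL.1, hL.2.1.diffLegal⟩

namespace IsFQSeq

variable {q : ℕ → ℕ}

theorem pow_le_and_le_pow (hq : IsFQSeq q) {ρ : ℝ} (hρ1 : 1 ≤ ρ) (hρ : ρ ^ 5 = ρ ^ 4 + 1)
    (n : ℕ) : ρ ^ n ≤ ρ ^ 4 * q (n + 2) ∧ (q (n + 2) : ℝ) ≤ 7 * ρ ^ n := by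
  have hq5 : ∀ n, (q (n + 5 + 2) : ℝ) = q (n + 4 + 2) + q (n + 2) := fun n => by
    exact_mod_cast hq.add_five (n := n + 2) (by omega)
  have hρ5 : ∀ n, ρ ^ (n + 5) = ρ ^ (n + 4) + ρ ^ n := fun n => by
    rw [pow_add, pow_add, hρ]
    ring
  constructor
  · refine sub_nonneg.1 (nonneg_of_add_five_eq (b := fun n => ρ ^ 4 * q (n + 2) - ρ ^ n)
      (fun n => by simp only [hq5, hρ5]; ring) (fun n hn => sub_nonneg.2 ?_) n)
    have : (1 : ℝ) ≤ q (n + 2) := by exact_mod_cast hq.pos (by omega)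
    calc ρ ^ n ≤ ρ ^ 4 := pow_le_pow_right₀ hρ1 (by omega)
      _ ≤ ρ ^ 4 * q (n + 2) := le_mul_of_one_le_right (by positivity) this
  · refine sub_nonneg.1 (nonneg_of_add_five_eq (b := fun n => 7 * ρ ^ n - q (n + 2))
      (fun n => by simp only [hq5, hρ5]; ring) (fun n hn => sub_nonneg.2 ?_) n)
    have : q (n + 2) ≤ q 6 := hq.le_of_le (by omega) (by omega)
    have : (q (n + 2) : ℝ) ≤ 7 := by exact_mod_cast hq.values.2.2.2.2.2.1 ▸ this
    nlinarith [one_le_pow₀ (n := n) hρ1]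

theorem diffLegalCount_le_card_legalBelow (hq : IsFQSeq q) (n : ℕ) :
    diffLegalCount (Icc 1 n) ≤ #(legalBelow q (n + 5)) := by
  rw [← diffLegalCount_map_add _ 1, map_add_right_Icc]
  refine card_le_card fun L hL => ?_
  simp only [legalBelow, mem_filter, mem_powerset] at hL ⊢
  have hsub : L ⊆ Icc 1 (n + 1) := hL.1.trans (Icc_subset_Icc (by omega) le_rfl)
  refine ⟨hsub.trans (Icc_subset_Icc le_rfl (by omega)),
    fqLegal_iff.2 ⟨hL.2, fun h => by simpa using hL.1 h.1⟩, ?_⟩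
  have := sum_le_sum_of_subset (f := q) hsub
  have : ∑ j ∈ Icc 1 (n + 1), q j + q 5 ≤ q (n + 6) := hq.sum_Icc_add_le (n + 1)
  have := hq.pos (i := 5) (by omega)
  show _ < q (n + 6)
  omega

theorem dFQ_eq_card (hq : IsFQSeq q) {n m : ℕ} (hm : m < q (n + 1)) :
    dFQ q m = #{L ∈ (Icc 1 n).powerset | FQLegal L ∧ ∑ j ∈ L, q j = m} := by
  have hiff : ∀ L : Finset ℕ, ((∀ j ∈ L, 1 ≤ j) ∧ FQLegal L ∧ ∑ j ∈ L, q j = m) ↔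
      L ∈ {L ∈ (Icc 1 n).powerset | FQLegal L ∧ ∑ j ∈ L, q j = m} := fun L => by
    simp only [mem_filter, mem_powerset, subset_iff, mem_Icc]
    refine ⟨fun ⟨hb, hL, hs⟩ => ⟨fun j hj => ⟨hb j hj, ?_⟩, hL, hs⟩,
      fun ⟨hb, hL, hs⟩ => ⟨fun j hj => (hb hj).1, hL, hs⟩⟩
    by_contra! h
    have := hq.le_of_le (i := n + 1) (j := j) (by omega) (by omega)
    have := single_le_sum (fun i _ => Nat.zero_le (q i)) hj
    omega
  rw [dFQ, Nat.card_congr (Equiv.subtypeEquivRight hiff), Nat.card_eq_fintype_card,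
    Fintype.card_coe]

theorem dFQave_eq (hq : IsFQSeq q) (n : ℕ) :
    dFQave q n = #(legalBelow q n) / q (n + 1) := by
  have : ∑ m ∈ range (q (n + 1)), dFQ q m = #(legalBelow q n) := by
    rw [sum_congr rfl fun m hm => hq.dFQ_eq_card (mem_range.1 hm), legalBelow,
      card_eq_sum_card_fiberwise (f := fun L => ∑ j ∈ L, q j) (t := range (q (n + 1)))
        fun L hL => mem_range.2 (mem_filter.1 hL).2.2]
    refine sum_congr rfl fun m hm => congrArg card ?_
    rw [filter_filter]
    refine filter_congr fun L _ => ?_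
    have := mem_range.1 hm
    constructor
    · rintro ⟨hL, rfl⟩
      exact ⟨⟨hL, this⟩, rfl⟩
    · rintro ⟨⟨hL, -⟩, hs⟩
      exact ⟨hL, hs⟩
  rw [dFQave, ← this, Nat.cast_sum]

theorem dFQave_bounds (hq : IsFQSeq q) {ρ μ : ℝ} (hρ1 : 1 ≤ ρ) (hρ : ρ ^ 5 = ρ ^ 4 + 1)
    (hμ : ∀ n, μ ^ n ≤ diffLegalCount (Icc 1 n) ∧ (diffLegalCount (Icc 1 n) : ℝ) ≤ μ ^ (n + 4))
    (k : ℕ) : μ ^ k / (7 * ρ ^ (k + 4)) ≤ dFQave q (k + 5) ∧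
      dFQave q (k + 5) ≤ μ ^ (k + 9) / ρ ^ k := by
  have hS1 : μ ^ k ≤ #(legalBelow q (k + 5)) :=
    (hμ k).1.trans (by exact_mod_cast hq.diffLegalCount_le_card_legalBelow k)
  have hS2 : (#(legalBelow q (k + 5)) : ℝ) ≤ μ ^ (k + 9) :=
    le_trans (by exact_mod_cast card_legalBelow_le q (k + 5)) (hμ (k + 5)).2
  have hρ0 : 0 < ρ := by linarith
  have hQ0 : (0 : ℝ) < q (k + 6) := by exact_mod_cast hq.pos (by omega)
  obtain ⟨hQ1, hQ2⟩ := hq.pow_le_and_le_pow hρ1 hρ (k + 4)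
  have hQ1 : ρ ^ k ≤ q (k + 6) := by
    rw [pow_add, mul_comm] at hQ1
    exact le_of_mul_le_mul_left hQ1 (by positivity)
  rw [hq.dFQave_eq]
  exact ⟨div_le_div₀ (by positivity) hS1 hQ0 hQ2,
    div_le_div₀ ((Nat.cast_nonneg _).trans hS2) hS2 (by positivity) hQ1⟩

end IsFQSeq

theorem stmt_5 (q : ℕ → ℕ) (hq : IsFQSeq q) :
    ∃ lam : ℝ, 1 < lam ∧ ∃ C1 C2 : ℝ, 0 < C1 ∧ C1 < C2 ∧
      ∀ᶠ n : ℕ in Filter.atTop,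
        C1 * lam ^ n ≤ dFQave q n ∧ dFQave q n ≤ C2 * lam ^ n := by
  obtain ⟨ρ, hρ1, hρ53, hρ⟩ := exists_pow_five_eq_pow_four_add_one
  obtain ⟨μ, hμ0, hμ⟩ := exists_pow_le_le_pow_add (fun n => diffLegalCount_pos (Icc 1 n))
    diffLegalCount_Icc_add_le mul_le_diffLegalCount_Icc
  have hρμ : ρ < μ := by
    by_contra! h
    have h91 : (91 : ℝ) ≤ μ ^ 16 :=
      le_trans (by exact_mod_cast ninety_one_le_diffLegalCount) (hμ 12).2
    have := pow_le_pow_left₀ hμ0.le h 16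
    have := pow_le_pow_left₀ (by linarith) hρ53 16
    norm_num at *
    linarith
  have hρ0 : 0 < ρ := by linarith
  have hμ5 : μ ≤ μ ^ 5 := le_self_pow₀ (by linarith) (by norm_num)
  have hC : 1 ≤ μ ^ 4 * ρ ^ 5 :=
    one_le_mul_of_one_le_of_one_le (one_le_pow₀ (by linarith)) (one_le_pow₀ hρ1)
  refine ⟨μ / ρ, (one_lt_div hρ0).2 hρμ, ρ / (7 * μ ^ 5), μ ^ 4 * ρ ^ 5,
    by positivity, (div_lt_one (by positivity)).2 (by linarith) |>.trans_le hC, ?_⟩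
  filter_upwards [Filter.eventually_ge_atTop 5] with n hn
  obtain ⟨k, rfl⟩ : ∃ k, n = k + 5 := ⟨n - 5, by omega⟩
  obtain ⟨hlo, hhi⟩ := hq.dFQave_bounds hρ1 hρ hμ k
  rw [div_pow]
  constructor
  · convert hlo using 1
    field_simp
    ring
  · convert hhi using 1
    field_simp
    ring
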